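/- arXiv:2509.06486 — 2 statements merged into one kernel-verified Lean document; each statement's English description precedes it below -/
import Mathlib

section
/- A skew-symmetrizable matrix B ∈ M_n(ℝ) is of quasi-integer type if and only if Sk(B) = D^{1/2} B D^{-1/2} is of quasi-integer type (where D is any skew-symmetrizer of B). Moreover, the set of skew-symmetric matrices of quasi-integer type equals { Sk(B) : B ∈ M_n(ℤ) integer skew-symmetrizable }. -/
open Matrix

noncomputable section

/-- A real matrix `B` is of quasi-integer type if `H B H⁻¹` has integer entries for some
positive diagonal matrix `H`. -/
def QuasiInteger {n : ℕ} (B : Matrix (Fin n) (Fin n) ℝ) : Prop :=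
  ∃ h : Fin n → ℝ, (∀ i, 0 < h i) ∧
    ∀ i j, ∃ m : ℤ,
      (Matrix.diagonal h * B * Matrix.diagonal (fun i => (h i)⁻¹)) i j = (m : ℝ)

/-- `B` is skew-symmetrizable: there is a positive diagonal `D` with `DB` skew-symmetric. -/
def SkewSymmetrizable {n : ℕ} (B : Matrix (Fin n) (Fin n) ℝ) : Prop :=
  ∃ d : Fin n → ℝ, (∀ i, 0 < d i) ∧
    (Matrix.diagonal d * B)ᵀ = -(Matrix.diagonal d * B)

/-- The map `Sk`: `Sk(B)_{ij} = sign(b_ij)·√|b_ij b_ji|`, which equals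
`D^{1/2} B D^{-1/2}` for any positive diagonal skew-symmetrizer `D` of `B`. -/
def Sk {n : ℕ} (B : Matrix (Fin n) (Fin n) ℝ) : Matrix (Fin n) (Fin n) ℝ :=
  fun i j => Real.sign (B i j) * Real.sqrt |B i j * B j i|

/-! Quasi-integer type is invariant under conjugation by positive diagonal matrices, and
`Sk B = D^{1/2} B D^{-1/2}` for any skew-symmetrizer `D` of `B`; this gives the first claim.
Conversely, if `S` is skew-symmetric and `B = H S H⁻¹` is integral, then `H⁻²` skew-symmetrizes `B`,
so `Sk B = H⁻¹ B H = S`. -/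

lemma Real.sign_mul_abs (x : ℝ) : Real.sign x * |x| = x := by
  rcases lt_trichotomy x 0 with hx | rfl | hx
  · rw [Real.sign_of_neg hx, abs_of_neg hx]; ring
  · simp
  · rw [Real.sign_of_pos hx, abs_of_pos hx]; ring

lemma transpose_eq_neg_iff {ι α : Type*} [Neg α] {M : Matrix ι ι α} :
    Mᵀ = -M ↔ ∀ i j, M j i = -M i j := by
  simp only [← Matrix.ext_iff, transpose_apply, Matrix.neg_apply]

def diagConj {ι : Type*} [Fintype ι] [DecidableEq ι] (c : ι → ℝ) (B : Matrix ι ι ℝ) :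
    Matrix ι ι ℝ :=
  diagonal c * B * diagonal c⁻¹

section DiagConj

variable {ι : Type*} [Fintype ι] [DecidableEq ι]

lemma diagConj_apply (c : ι → ℝ) (B : Matrix ι ι ℝ) (i j : ι) :
    diagConj c B i j = c i * B i j / c j := by
  simp [diagConj, diagonal_mul, mul_diagonal, div_eq_mul_inv]

lemma diagConj_diagConj (c c' : ι → ℝ) (B : Matrix ι ι ℝ) :
    diagConj c (diagConj c' B) = diagConj (c * c') B := by
  ext i j
  simp only [diagConj_apply, Pi.mul_apply]
  ring

lemma diagConj_inv_diagConj {c : ι → ℝ} (hc : ∀ i, c i ≠ 0) (B : Matrix ι ι ℝ) :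
    diagConj c⁻¹ (diagConj c B) = B := by
  ext i j
  simp only [diagConj_apply, Pi.inv_apply]
  field_simp [hc i, hc j]

end DiagConj

section QuasiIntegerType

variable {n : ℕ}

lemma quasiInteger_iff_exists_diagConj (B : Matrix (Fin n) (Fin n) ℝ) :
    QuasiInteger B ↔ ∃ h : Fin n → ℝ, (∀ i, 0 < h i) ∧ ∀ i j, ∃ m : ℤ, diagConj h B i j = m :=
  Iff.rfl

lemma QuasiInteger.diagConj {B : Matrix (Fin n) (Fin n) ℝ} (hB : QuasiInteger B)
    {c : Fin n → ℝ} (hc : ∀ i, 0 < c i) : QuasiInteger (diagConj c B) := by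
  obtain ⟨h, hpos, hint⟩ := (quasiInteger_iff_exists_diagConj B).1 hB
  refine (quasiInteger_iff_exists_diagConj _).2
    ⟨h * c⁻¹, fun i => mul_pos (hpos i) (inv_pos.2 (hc i)), ?_⟩
  rwa [← diagConj_diagConj, diagConj_inv_diagConj fun i => (hc i).ne']

lemma quasiInteger_diagConj_iff {B : Matrix (Fin n) (Fin n) ℝ} {c : Fin n → ℝ}
    (hc : ∀ i, 0 < c i) : QuasiInteger (diagConj c B) ↔ QuasiInteger B := by
  refine ⟨fun h => ?_, fun h => h.diagConj hc⟩
  rw [← diagConj_inv_diagConj (fun i => (hc i).ne') B]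
  exact h.diagConj fun i => inv_pos.2 (hc i)

lemma quasiInteger_of_forall_intCast {B : Matrix (Fin n) (Fin n) ℝ}
    (hB : ∀ i j, ∃ m : ℤ, B i j = m) : QuasiInteger B :=
  ⟨1, fun _ => one_pos, by simpa [diagonal_one] using hB⟩

lemma sk_eq_diagConj_sqrt {B : Matrix (Fin n) (Fin n) ℝ} {d : Fin n → ℝ}
    (hd : ∀ i, 0 < d i) (hdB : (diagonal d * B)ᵀ = -(diagonal d * B)) :
    Sk B = diagConj (fun i => √(d i)) B := by
  ext i j
  have hji : B j i = -(d i / d j) * B i j := by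
    have := transpose_eq_neg_iff.1 hdB j i
    simp only [diagonal_mul] at this
    field_simp [(hd j).ne']
    linarith
  have habs : |B i j * B j i| = (d i / d j) * B i j ^ 2 := by
    rw [hji, show B i j * (-(d i / d j) * B i j) = -((d i / d j) * B i j ^ 2) by ring,
      abs_neg, abs_of_nonneg (by have := hd i; have := hd j; positivity)]
  rw [Sk, diagConj_apply, habs, Real.sqrt_mul (div_pos (hd i) (hd j)).le,
    Real.sqrt_div (hd i).le, Real.sqrt_sq_eq_abs,
    show ∀ x y : ℝ, Real.sign x * (y * |x|) = (Real.sign x * |x|) * y by intros; ring,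
    Real.sign_mul_abs]
  ring

lemma transpose_sk {B : Matrix (Fin n) (Fin n) ℝ} (hB : SkewSymmetrizable B) :
    (Sk B)ᵀ = -Sk B := by
  obtain ⟨d, hd, hdB⟩ := hB
  rw [sk_eq_diagConj_sqrt hd hdB]
  refine transpose_eq_neg_iff.2 fun i j => ?_
  have := transpose_eq_neg_iff.1 hdB i j
  simp only [diagonal_mul, diagConj_apply] at this ⊢
  rw [← Real.sq_sqrt (hd i).le, ← Real.sq_sqrt (hd j).le] at this
  field_simp [(Real.sqrt_pos.2 (hd i)).ne', (Real.sqrt_pos.2 (hd j)).ne']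
  linear_combination this

lemma SkewSymmetrizable.quasiInteger_sk_iff {B : Matrix (Fin n) (Fin n) ℝ}
    (hB : SkewSymmetrizable B) : QuasiInteger (Sk B) ↔ QuasiInteger B := by
  obtain ⟨d, hd, hdB⟩ := hB
  rw [sk_eq_diagConj_sqrt hd hdB]
  exact quasiInteger_diagConj_iff fun i => Real.sqrt_pos.2 (hd i)

lemma transpose_diagonal_inv_sq_mul_diagConj {S : Matrix (Fin n) (Fin n) ℝ} (hS : Sᵀ = -S)
    {c : Fin n → ℝ} (hc : ∀ i, c i ≠ 0) :
    (diagonal (fun i => (c i ^ 2)⁻¹) * diagConj c S)ᵀ =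
      -(diagonal (fun i => (c i ^ 2)⁻¹) * diagConj c S) := by
  refine transpose_eq_neg_iff.2 fun i j => ?_
  simp only [diagonal_mul, diagConj_apply, transpose_eq_neg_iff.1 hS i j]
  field_simp [hc i, hc j]

lemma skewSymmetrizable_diagConj {S : Matrix (Fin n) (Fin n) ℝ} (hS : Sᵀ = -S)
    {c : Fin n → ℝ} (hc : ∀ i, 0 < c i) : SkewSymmetrizable (diagConj c S) :=
  ⟨_, fun i => by have := hc i; positivity,
    transpose_diagonal_inv_sq_mul_diagConj hS fun i => (hc i).ne'⟩

lemma sk_diagConj {S : Matrix (Fin n) (Fin n) ℝ} (hS : Sᵀ = -S) {c : Fin n → ℝ}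
    (hc : ∀ i, 0 < c i) : Sk (diagConj c S) = S := by
  rw [sk_eq_diagConj_sqrt (fun i => by have := hc i; positivity)
    (transpose_diagonal_inv_sq_mul_diagConj hS fun i => (hc i).ne')]
  convert diagConj_inv_diagConj (fun i => (hc i).ne') S using 2
  ext i
  rw [Pi.inv_apply, Real.sqrt_inv, Real.sqrt_sq (hc i).le]

end QuasiIntegerType

/-- a skew-symmetrizable `B` is of quasi-integer type iff `Sk(B)` is; and the
set of skew-symmetric quasi-integer type matrices is exactly `{Sk(B) : B integer
skew-symmetrizable}`. -/
theorem stmt8 {n : ℕ} :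
    (∀ B : Matrix (Fin n) (Fin n) ℝ, SkewSymmetrizable B →
      (QuasiInteger B ↔ QuasiInteger (Sk B))) ∧
    ({S : Matrix (Fin n) (Fin n) ℝ | Sᵀ = -S ∧ QuasiInteger S} =
      {S : Matrix (Fin n) (Fin n) ℝ | ∃ B : Matrix (Fin n) (Fin n) ℝ,
        (∀ i j, ∃ m : ℤ, B i j = (m : ℝ)) ∧ SkewSymmetrizable B ∧ S = Sk B}) := by
  refine ⟨fun B hB => hB.quasiInteger_sk_iff.symm, Set.ext fun S => ⟨?_, ?_⟩⟩
  · rintro ⟨hS, h, hpos, hint⟩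
    exact ⟨diagConj h S, hint, skewSymmetrizable_diagConj hS hpos, (sk_diagConj hS hpos).symm⟩
  · rintro ⟨B, hBint, hB, rfl⟩
    exact ⟨transpose_sk hB, hB.quasiInteger_sk_iff.2 (quasiInteger_of_forall_intCast hBint)⟩

end
end

section
/- Suppose a C-matrix C_t of a real skew-symmetrizable matrix B is column sign-coherent, with ε_{k;t} the common sign of the k-th column. Then for t' k-adjacent to t, the mutation formulas simplify to C_{t'} = C_t (J_k + [ε_{k;t} B_t]_+^{k•}) and G_{t'} = G_t (J_k + [-ε_{k;t} B_t]_+^{•k}). -/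
open Matrix

noncomputable section

/-- Entrywise positive part `[A]₊`. -/
def matPos {n : ℕ} (A : Matrix (Fin n) (Fin n) ℝ) : Matrix (Fin n) (Fin n) ℝ :=
  fun i j => max (A i j) 0

/-- `J_k`: the identity matrix with the `(k,k)` entry replaced by `-1`. -/
def Jmat {n : ℕ} (k : Fin n) : Matrix (Fin n) (Fin n) ℝ :=
  Matrix.diagonal (fun i => if i = k then -1 else 1)

/-- `A^{k•} = E_kk A`: keep only the `k`-th row of `A`. -/
def rowOnly {n : ℕ} (k : Fin n) (A : Matrix (Fin n) (Fin n) ℝ) : Matrix (Fin n) (Fin n) ℝ :=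
  fun i j => if i = k then A i j else 0

/-- `A^{•k} = A E_kk`: keep only the `k`-th column of `A`. -/
def colOnly {n : ℕ} (k : Fin n) (A : Matrix (Fin n) (Fin n) ℝ) : Matrix (Fin n) (Fin n) ℝ :=
  fun i j => if j = k then A i j else 0

/-- Matrix mutation `μ_k(B) = (J_k + [-B]₊^{•k}) B (J_k + [B]₊^{k•})`. -/
def mutB {n : ℕ} (B : Matrix (Fin n) (Fin n) ℝ) (k : Fin n) : Matrix (Fin n) (Fin n) ℝ :=
  (Jmat k + colOnly k (matPos (-B))) * B * (Jmat k + rowOnly k (matPos B))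

/-- One mutation step of the triple `(B_t, C_t, G_t)` in direction `k`,
with initial exchange matrix `B0`. -/
def stepBCG {n : ℕ} (B0 : Matrix (Fin n) (Fin n) ℝ)
    (X : Matrix (Fin n) (Fin n) ℝ × Matrix (Fin n) (Fin n) ℝ × Matrix (Fin n) (Fin n) ℝ)
    (k : Fin n) :
    Matrix (Fin n) (Fin n) ℝ × Matrix (Fin n) (Fin n) ℝ × Matrix (Fin n) (Fin n) ℝ :=
  ⟨mutB X.1 k,
   X.2.1 * Jmat k + X.2.1 * rowOnly k (matPos X.1) + colOnly k (matPos (-X.2.1)) * X.1,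
   X.2.2 * Jmat k + X.2.2 * colOnly k (matPos (-X.1)) - B0 * colOnly k (matPos (-X.2.1))⟩

/-- The triple `(B_t, C_t, G_t)` at the vertex of the `n`-regular tree reached from the
initial vertex by the path `w` (a list of mutation directions). -/
def BCG {n : ℕ} (B0 : Matrix (Fin n) (Fin n) ℝ) (w : List (Fin n)) :
    Matrix (Fin n) (Fin n) ℝ × Matrix (Fin n) (Fin n) ℝ × Matrix (Fin n) (Fin n) ℝ :=
  w.foldl (stepBCG B0) (B0, 1, 1)

/-- The `B`-pattern. -/
def Bpat {n : ℕ} (B0 : Matrix (Fin n) (Fin n) ℝ) (w : List (Fin n)) :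
    Matrix (Fin n) (Fin n) ℝ := (BCG B0 w).1

/-- The `C`-pattern. -/
def Cpat {n : ℕ} (B0 : Matrix (Fin n) (Fin n) ℝ) (w : List (Fin n)) :
    Matrix (Fin n) (Fin n) ℝ := (BCG B0 w).2.1

/-- The `G`-pattern. -/
def Gpat {n : ℕ} (B0 : Matrix (Fin n) (Fin n) ℝ) (w : List (Fin n)) :
    Matrix (Fin n) (Fin n) ℝ := (BCG B0 w).2.2

/-- Column sign-coherence of a matrix. -/
def ColSignCoherent {n : ℕ} (C : Matrix (Fin n) (Fin n) ℝ) : Prop :=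
  ∀ j, (∀ i, 0 ≤ C i j) ∨ (∀ i, C i j ≤ 0)

/-- Row sign-coherence of a matrix. -/
def RowSignCoherent {n : ℕ} (G : Matrix (Fin n) (Fin n) ℝ) : Prop :=
  ∀ i, (∀ j, 0 ≤ G i j) ∨ (∀ j, G i j ≤ 0)

lemma colOnly_mul_apply {n : ℕ} (k : Fin n) (M A : Matrix (Fin n) (Fin n) ℝ) (i j : Fin n) :
    (colOnly k M * A) i j = M i k * A k j := by
  rw [Matrix.mul_apply, Finset.sum_eq_single k]
  · simp [colOnly]
  · intro b _ hb; simp [colOnly, hb]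
  · simp
lemma mul_rowOnly_apply {n : ℕ} (k : Fin n) (A M : Matrix (Fin n) (Fin n) ℝ) (i j : Fin n) :
    (A * rowOnly k M) i j = A i k * M k j := by
  rw [Matrix.mul_apply, Finset.sum_eq_single k]
  · simp [rowOnly]
  · intro b _ hb; simp [rowOnly, hb]
  · simp
lemma Jmat_mul_apply {n : ℕ} (k : Fin n) (A : Matrix (Fin n) (Fin n) ℝ) (i j : Fin n) :
    (Jmat k * A) i j = (if i = k then -1 else 1) * A i j := by
  rw [Jmat, Matrix.diagonal_mul]
lemma mul_Jmat_apply {n : ℕ} (k : Fin n) (A : Matrix (Fin n) (Fin n) ℝ) (i j : Fin n) :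
    (A * Jmat k) i j = A i j * (if j = k then -1 else 1) := by
  rw [Jmat, Matrix.mul_diagonal]
lemma mutB_apply {n : ℕ} (B : Matrix (Fin n) (Fin n) ℝ) (k i j : Fin n) :
    mutB B k i j = (if i = k then -1 else 1) * B i j * (if j = k then -1 else 1)
      + (if i = k then -1 else 1) * B i k * max (B k j) 0
      + max (-B i k) 0 * B k j * (if j = k then -1 else 1)
      + max (-B i k) 0 * B k k * max (B k j) 0 := by
  simp only [mutB, Matrix.mul_add, Matrix.add_mul, Matrix.add_apply, mul_Jmat_apply,
    mul_rowOnly_apply, Jmat_mul_apply, colOnly_mul_apply, matPos, Matrix.neg_apply]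
  ring
lemma skew_step {n : ℕ} (d : Fin n → ℝ) (hd : ∀ i, 0 < d i)
    (B : Matrix (Fin n) (Fin n) ℝ) (k : Fin n)
    (h : ∀ i j, d j * B j i = -(d i * B i j)) :
    ∀ i j, d j * mutB B k j i = -(d i * mutB B k i j) := by
  have hkk : B k k = 0 := by have := h k k; nlinarith [hd k]
  have key : ∀ j, d j * max (-B j k) 0 = d k * max (B k j) 0 := by
    intro j
    have h1 : d j * (-B j k) = d k * B k j := by have := h k j; linarith
    rw [mul_max_of_nonneg _ _ (hd j).le, mul_max_of_nonneg _ _ (hd k).le, mul_zero, mul_zero, h1]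
  intro i j
  rw [mutB_apply, mutB_apply, hkk]
  by_cases hi : i = k <;> by_cases hj : j = k
  · simp [hi, hj, hkk]
  · simp only [hi, hj, hkk, if_true, ite_true, if_false, ite_false, if_neg hj, neg_zero, max_self, mul_zero,
      zero_mul, add_zero, zero_add, one_mul, mul_one, neg_mul, mul_neg, neg_neg, if_pos rfl]
    have := h k j
    linarith
  · simp only [hi, hj, hkk, if_true, ite_true, if_false, ite_false, if_neg hi, neg_zero, max_self, mul_zero,
      zero_mul, add_zero, zero_add, one_mul, mul_one, neg_mul, mul_neg, neg_neg, if_pos rfl]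
    have := h i k
    linarith
  · simp only [if_neg hi, if_neg hj, one_mul, mul_one]
    linear_combination (h i j) + max (B k i) 0 * (h k j) + max (B k j) 0 * (h k i)
      + B k i * (key j) + B k j * (key i)
lemma Jmat_apply {n : ℕ} (k i j : Fin n) :
    Jmat k i j = if i = j then (if i = k then -1 else 1) else 0 := by
  rw [Jmat, Matrix.diagonal_apply]
lemma PP_one {n : ℕ} (B : Matrix (Fin n) (Fin n) ℝ) (k : Fin n) (hkk : B k k = 0) :
    (Jmat k + colOnly k (matPos (-B))) * (Jmat k + colOnly k (matPos (-B))) = 1 := by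
  ext i j
  simp only [Matrix.mul_add, Matrix.add_mul, Matrix.add_apply, mul_Jmat_apply, Jmat_mul_apply,
    colOnly_mul_apply, Matrix.one_apply, Jmat_apply, colOnly, matPos, Matrix.neg_apply]
  by_cases hi : i = k <;> by_cases hj : j = k
  · simp [hi, hj, hkk]
  · have hkj : ¬ k = j := fun h => hj h.symm
    simp [hi, hj, hkj, hkk]
  · have hki : ¬ k = i := fun h => hi h.symm
    simp [hi, hj, hki, hkk]
  · have hkj : ¬ k = j := fun h => hj h.symm
    have hki : ¬ k = i := fun h => hi h.symm
    by_cases hij : i = j <;> simp [hi, hj, hki, hkj, hij, hkk]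
lemma RP_negR {n : ℕ} (B C : Matrix (Fin n) (Fin n) ℝ) (k : Fin n) (hkk : B k k = 0) :
    colOnly k (matPos (-C)) * (Jmat k + colOnly k (matPos (-B))) = -(colOnly k (matPos (-C))) := by
  ext i j
  simp only [Matrix.mul_add, Matrix.add_apply, mul_Jmat_apply, colOnly_mul_apply,
    Matrix.neg_apply, Jmat_apply, colOnly, matPos]
  by_cases hj : j = k
  · simp [hj, hkk]
  · have hkj : ¬ k = j := fun h => hj h.symm
    simp [hj, hkj]
lemma RBQ_RB {n : ℕ} (B C : Matrix (Fin n) (Fin n) ℝ) (k : Fin n) (hkk : B k k = 0) :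
    colOnly k (matPos (-C)) * (B * (Jmat k + rowOnly k (matPos B)))
      = colOnly k (matPos (-C)) * B := by
  ext i j
  simp only [colOnly_mul_apply, Matrix.mul_add, Matrix.add_apply, mul_Jmat_apply,
    mul_rowOnly_apply]
  by_cases hj : j = k <;> simp [hj, matPos, hkk]
lemma gb_step {n : ℕ} (B0 B C G : Matrix (Fin n) (Fin n) ℝ) (k : Fin n) (hkk : B k k = 0)
    (hGB : G * B = B0 * C) :
    (G * Jmat k + G * colOnly k (matPos (-B)) - B0 * colOnly k (matPos (-C))) * mutB B k
      = B0 * (C * Jmat k + C * rowOnly k (matPos B) + colOnly k (matPos (-C)) * B) := by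
  set P := Jmat k + colOnly k (matPos (-B)) with hP
  set Q := Jmat k + rowOnly k (matPos B) with hQ
  set R := colOnly k (matPos (-C)) with hR
  have h1 : G * Jmat k + G * colOnly k (matPos (-B)) = G * P := (Matrix.mul_add _ _ _).symm
  have h2 : C * Jmat k + C * rowOnly k (matPos B) = C * Q := (Matrix.mul_add _ _ _).symm
  rw [h1, h2, mutB]
  calc (G * P - B0 * R) * (P * B * Q)
      = G * (P * (P * (B * Q))) - B0 * (R * (P * (B * Q))) := by
        rw [Matrix.sub_mul, Matrix.mul_assoc P B Q, Matrix.mul_assoc G P,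
          Matrix.mul_assoc B0 R]
    _ = G * (B * Q) - B0 * (-(R * (B * Q))) := by
        rw [← Matrix.mul_assoc P P, PP_one B k hkk, Matrix.one_mul,
          ← Matrix.mul_assoc R P, RP_negR B C k hkk, Matrix.neg_mul]
    _ = B0 * (C * Q) + B0 * (R * B) := by
        rw [RBQ_RB B C k hkk, ← Matrix.mul_assoc G B, hGB, Matrix.mul_assoc B0 C Q,
          mul_neg, sub_neg_eq_add]
    _ = B0 * (C * Q + R * B) := (Matrix.mul_add _ _ _).symm
lemma BCG_snoc {n : ℕ} (B0 : Matrix (Fin n) (Fin n) ℝ) (w : List (Fin n)) (k : Fin n) :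
    BCG B0 (w ++ [k]) = stepBCG B0 (BCG B0 w) k := by
  simp [BCG, List.foldl_append]
lemma invariant {n : ℕ} (B0 : Matrix (Fin n) (Fin n) ℝ) (d : Fin n → ℝ) (hd : ∀ i, 0 < d i)
    (h0 : ∀ i j, d j * B0 j i = -(d i * B0 i j)) (w : List (Fin n)) :
    (∀ i j, d j * Bpat B0 w j i = -(d i * Bpat B0 w i j)) ∧
    Gpat B0 w * Bpat B0 w = B0 * Cpat B0 w := by
  induction w using List.reverseRecOn with
  | nil =>
    constructor
    · exact h0
    · simp [Bpat, Gpat, Cpat, BCG]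
  | append_singleton w k ih =>
    obtain ⟨ihs, ihGB⟩ := ih
    have hB' : Bpat B0 (w ++ [k]) = mutB (Bpat B0 w) k := by
      rw [Bpat, BCG_snoc]; rfl
    have hkk : Bpat B0 w k k = 0 := by have := ihs k k; nlinarith [hd k]
    constructor
    · rw [hB']; exact skew_step d hd _ k ihs
    · rw [hB', Gpat, Cpat, BCG_snoc]
      exact gb_step B0 (Bpat B0 w) (Cpat B0 w) (Gpat B0 w) k hkk ihGB
lemma mul_colOnly_apply {n : ℕ} (k : Fin n) (A M : Matrix (Fin n) (Fin n) ℝ) (i j : Fin n) :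
    (A * colOnly k M) i j = if j = k then ∑ l, A i l * M l k else 0 := by
  by_cases hj : j = k
  · subst hj; simp [Matrix.mul_apply, colOnly]
  · simp [Matrix.mul_apply, colOnly, hj]
lemma max_sub_max (b : ℝ) : max (-b) 0 - max b 0 = -b := by
  rcases le_total 0 b with h | h
  · rw [max_eq_right (neg_nonpos.mpr h), max_eq_left h]; ring
  · rw [max_eq_left (neg_nonneg.mpr h), max_eq_right h]; ring

/-- if the `C`-matrix `C_t` (at vertex `w`) is column sign-coherent and
`ε` is the common sign of its `k`-th column, then mutation in direction `k` simplifies to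
`C_{t'} = C_t (J_k + [ε B_t]₊^{k•})` and `G_{t'} = G_t (J_k + [-ε B_t]₊^{•k})`. -/
theorem stmt12 {n : ℕ} (B : Matrix (Fin n) (Fin n) ℝ)
    (hB : SkewSymmetrizable B) (w : List (Fin n)) (k : Fin n) (ε : ℝ)
    (hcoh : ColSignCoherent (Cpat B w))
    (hε : (ε = 1 ∧ ∀ i, 0 ≤ Cpat B w i k) ∨ (ε = -1 ∧ ∀ i, Cpat B w i k ≤ 0)) :
    Cpat B (w ++ [k]) = Cpat B w * (Jmat k + rowOnly k (matPos (ε • Bpat B w))) ∧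
    Gpat B (w ++ [k]) = Gpat B w * (Jmat k + colOnly k (matPos (-(ε • Bpat B w)))) := by
  obtain ⟨d, hd, hskew⟩ := hB
  have h0 : ∀ i j, d j * B j i = -(d i * B i j) := by
    intro i j
    have := congrFun (congrFun hskew i) j
    simpa [Matrix.transpose_apply, Matrix.diagonal_mul] using this
  obtain ⟨hskw, hGB⟩ := invariant B d hd h0 w
  have hC' : Cpat B (w ++ [k]) = Cpat B w * Jmat k + Cpat B w * rowOnly k (matPos (Bpat B w))
      + colOnly k (matPos (-(Cpat B w))) * Bpat B w := by
    rw [Cpat, BCG_snoc]; rfl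
  have hG' : Gpat B (w ++ [k]) = Gpat B w * Jmat k
      + Gpat B w * colOnly k (matPos (-(Bpat B w)))
      - B * colOnly k (matPos (-(Cpat B w))) := by
    rw [Gpat, BCG_snoc]; rfl
  rcases hε with ⟨rfl, hpos⟩ | ⟨rfl, hneg⟩
  · have hR : colOnly k (matPos (-(Cpat B w))) = 0 := by
      ext i j
      by_cases hj : j = k
      · simp [colOnly, matPos, hj, max_eq_right (neg_nonpos.mpr (hpos i))]
      · simp [colOnly, hj]
    rw [one_smul]
    constructor
    · rw [hC', hR, Matrix.zero_mul, add_zero, Matrix.mul_add]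
    · rw [hG', hR, Matrix.mul_zero, sub_zero, Matrix.mul_add]
  · rw [neg_one_smul, neg_neg]
    constructor
    · rw [hC', Matrix.mul_add]
      ext i j
      simp only [Matrix.add_apply, mul_Jmat_apply, mul_rowOnly_apply, colOnly_mul_apply,
        matPos, Matrix.neg_apply]
      rw [max_eq_left (neg_nonneg.mpr (hneg i))]
      rcases le_total 0 (Bpat B w k j) with hb | hb
      · rw [max_eq_left hb, max_eq_right (neg_nonpos.mpr hb)]; ring
      · rw [max_eq_right hb, max_eq_left (neg_nonneg.mpr hb)]; ring
    · rw [hG', Matrix.mul_add]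
      ext i j
      simp only [Matrix.add_apply, Matrix.sub_apply, mul_Jmat_apply, mul_colOnly_apply,
        matPos, Matrix.neg_apply]
      by_cases hj : j = k
      · simp only [hj, if_pos rfl, eq_self_iff_true, if_true, ite_true]
        have hGBik : ∑ l, Gpat B w i l * Bpat B w l k = ∑ l, B i l * Cpat B w l k := by
          have := congrFun (congrFun hGB i) k
          simpa [Matrix.mul_apply] using this
        have e2 : ∑ l, B i l * max (-(Cpat B w l k)) 0 = -∑ l, B i l * Cpat B w l k := by
          rw [← Finset.sum_neg_distrib]
          refine Finset.sum_congr rfl fun l _ => ?_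
          rw [max_eq_left (neg_nonneg.mpr (hneg l))]; ring
        have e3 : (∑ l, Gpat B w i l * max (-(Bpat B w l k)) 0)
            - (∑ l, Gpat B w i l * max (Bpat B w l k) 0)
            = -∑ l, Gpat B w i l * Bpat B w l k := by
          rw [← Finset.sum_sub_distrib, ← Finset.sum_neg_distrib]
          refine Finset.sum_congr rfl fun l _ => ?_
          rw [← mul_sub, max_sub_max]; ring
        rw [e2, hGBik] at *
        linarith [e3]
      · simp [hj]

end
end
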